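/- Let X be a complex Banach space, A : D(A) ⊆ X → X a linear operator, and 1 ≤ p < ∞. Suppose that for every f ∈ L^p(𝕋;X) there exists z ∈ L^p(𝕋;X) such that ẑ(k) ∈ D(A) and (ik)³ ẑ(k) − A ẑ(k) = f̂(k) for all k ∈ ℤ. Then for every k ∈ ℤ the map Δ_k : D(A) → X, Δ_k x = (ik)³x − Ax, is surjective: for every y ∈ X there exists x ∈ D(A) with (ik)³x − Ax = y. -/

import Mathlib

/- The solvability hypothesis applied to the single mode `f t = e^{ikt} y` (which lies in every
`L^p` since it is continuous on the compact circle) gives `z` with `Δ_k ẑ(k) = f̂(k) = y`. -/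

open MeasureTheory AddCircle Real ENNReal

instance : Fact (0 < 2 * π) := ⟨by positivity⟩

section FourierCoeff

variable {T : ℝ} [Fact (0 < T)] {E : Type*} [NormedAddCommGroup E] [NormedSpace ℂ E]
  [CompleteSpace E]

theorem fourierCoeff_smul_const (g : AddCircle T → ℂ) (y : E) (n : ℤ) :
    fourierCoeff (fun t => g t • y) n = fourierCoeff g n • y := by
  simp only [fourierCoeff, smul_smul, smul_eq_mul]
  exact integral_smul_const _ y

theorem fourierCoeff_fourier_smul (n : ℤ) (y : E) :
    fourierCoeff (fun t : AddCircle T => fourier n t • y) = Pi.single n y := by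
  ext m
  rw [fourierCoeff_smul_const, fourierCoeff_fourier]
  obtain rfl | hmn := eq_or_ne m n <;> simp_all

end FourierCoeff

theorem symbols_surjective_of_solvable_general
    {X : Type} [NormedAddCommGroup X] [NormedSpace ℂ X] [CompleteSpace X]
    (D : Submodule ℂ X) (A : D →ₗ[ℂ] X)
    (p : ℝ≥0∞)
    (hsolv : ∀ f : AddCircle (2 * π) → X, MemLp f p haarAddCircle →
      ∃ z : AddCircle (2 * π) → X, MemLp z p haarAddCircle ∧
        ∀ k : ℤ, ∃ h : fourierCoeff z k ∈ D,
          (Complex.I * (k : ℂ)) ^ 3 • fourierCoeff z k - A ⟨fourierCoeff z k, h⟩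
            = fourierCoeff f k) :
    ∀ k : ℤ, ∀ y : X, ∃ x : D, (Complex.I * (k : ℂ)) ^ 3 • (x : X) - A x = y := by
  intro k y
  let f : AddCircle (2 * π) → X := fun t => fourier k t • y
  have hf : MemLp f p haarAddCircle :=
    (by fun_prop : Continuous f).memLp_of_hasCompactSupport (.of_compactSpace f)
  obtain ⟨z, -, hz⟩ := hsolv f hf
  obtain ⟨hzD, hΔ⟩ := hz k
  refine ⟨⟨fourierCoeff z k, hzD⟩, ?_⟩
  rw [hΔ, fourierCoeff_fourier_smul, Pi.single_eq_same]

theorem symbols_surjective_of_solvable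
    {X : Type} [NormedAddCommGroup X] [NormedSpace ℂ X] [CompleteSpace X]
    (D : Submodule ℂ X) (A : D →ₗ[ℂ] X)
    (p : ℝ≥0∞) (hp1 : 1 ≤ p) (hp2 : p ≠ ⊤)
    (hsolv : ∀ f : AddCircle (2 * π) → X, MemLp f p haarAddCircle →
      ∃ z : AddCircle (2 * π) → X, MemLp z p haarAddCircle ∧
        ∀ k : ℤ, ∃ h : fourierCoeff z k ∈ D,
          (Complex.I * (k : ℂ)) ^ 3 • fourierCoeff z k - A ⟨fourierCoeff z k, h⟩
            = fourierCoeff f k) :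
    ∀ k : ℤ, ∀ y : X, ∃ x : D, (Complex.I * (k : ℂ)) ^ 3 • (x : X) - A x = y :=
  symbols_surjective_of_solvable_general D A p hsolv
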